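/- arXiv:1812.10644 — 2 statements merged into one kernel-verified Lean document; each statement's English description precedes it below -/
import Mathlib

section
/- Let $(X_i)_{i=1}^n$ be i.i.d. random variables with values in a (separable) Banach space, and let $S_k = X_1 + \cdots + X_k$. Then for every $\varepsilon > 0$, $\mathbb{P}(\max_{1 \le k \le n} \|S_k\| \ge \varepsilon) \le 3 \max_{1 \le k \le n} \mathbb{P}(\|S_k\| \ge \varepsilon/3)$. -/
open MeasureTheory ProbabilityTheory Function
open scoped ENNReal

/-!
Decompose the event `max_{k ≤ n} ‖S_k‖ ≥ ε` according to the first index `k` with `‖S_k‖ ≥ ε`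
(the sets `disjointed`). On the `k`-th piece either `‖S_n‖ ≥ ε/3` or the tail `S_n - S_k` has
norm `≥ ε/3`, because `ε/3 + ε/3 ≤ ε`. The piece depends only on `X_i, i < k`, the tail only on
`X_i, i ≥ k`, so they are independent, and the tail is distributed as `S_{n-k}`. Summing over `k`
bounds the probability by `P(‖S_n‖ ≥ ε/3) + max_k P(‖S_k‖ ≥ ε/3)`, twice the maximum.
-/

theorem MeasurableSet.disjointed_of_le {Ω : Type*} {m : MeasurableSpace Ω} {s : ℕ → Set Ω}
    {k : ℕ} (hs : ∀ j ≤ k, MeasurableSet[m] (s j)) : MeasurableSet[m] (disjointed s k) := by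
  rw [disjointed_eq_inter_compl]
  exact (hs k le_rfl).inter <|
    MeasurableSet.iInter fun j => MeasurableSet.iInter fun hj => (hs j hj.le).compl

theorem measurable_sum_iSup_comap {Ω ι E : Type*} [AddCommMonoid E] [MeasurableSpace E]
    [MeasurableAdd₂ E] {X : ι → Ω → E} {s : Set ι} {t : Finset ι} (ht : ↑t ⊆ s) :
    Measurable[⨆ i ∈ s, MeasurableSpace.comap (X i) ‹_›] (fun ω => ∑ i ∈ t, X i ω) :=
  Finset.measurable_sum _ fun i hi =>
    (comap_measurable (X i)).mono (le_biSup (fun i => MeasurableSpace.comap (X i) _) (ht hi)) le_rfl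

section

variable {Ω : Type*} [MeasurableSpace Ω] {μ : Measure Ω}

theorem measure_biUnion_le_add_of_indep_disjointed [IsProbabilityMeasure μ] {s : ℕ → Set Ω}
    {B : Set Ω} {C : ℕ → Set Ω} {n : ℕ} {M : ℝ≥0∞} (hs : ∀ k, MeasurableSet (s k))
    (hcover : ∀ k ≤ n, s k ⊆ B ∪ C k)
    (hindep : ∀ k ≤ n, μ (disjointed s k ∩ C k) = μ (disjointed s k) * μ (C k))
    (hC : ∀ k ≤ n, μ (C k) ≤ M) :
    μ (⋃ k ≤ n, s k) ≤ μ B + M := by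
  set A := disjointed s
  have hA : ∀ k, MeasurableSet (A k) := MeasurableSet.disjointed hs
  have hdisj (ν : Measure Ω) : Set.Pairwise (Finset.range (n + 1)) (AEDisjoint ν on A) :=
    fun i _ j _ hij => (disjoint_disjointed s hij).aedisjoint
  have hsum : ∑ k ∈ Finset.range (n + 1), μ (A k) ≤ 1 := by
    simpa using sum_measure_le_measure_univ (fun k _ => (hA k).nullMeasurableSet) (hdisj μ)
  have hsumB : ∑ k ∈ Finset.range (n + 1), μ (A k ∩ B) ≤ μ B := by
    simpa [Measure.restrict_apply (hA _)] using
      sum_measure_le_measure_univ (fun k _ => (hA k).nullMeasurableSet) (hdisj (μ.restrict B))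
  calc μ (⋃ k ≤ n, s k)
      = ∑ k ∈ Finset.range (n + 1), μ (A k) := by
        have hU : ⋃ k ≤ n, s k = ⋃ k ∈ Finset.range (n + 1), A k := by
          rw [biUnion_range_succ_disjointed, partialSups_eq_biSup]; rfl
        rw [hU, measure_biUnion_finset (fun i _ j _ hij => disjoint_disjointed s hij)
          fun k _ => hA k]
    _ ≤ ∑ k ∈ Finset.range (n + 1), (μ (A k ∩ B) + μ (A k) * M) := by
        refine Finset.sum_le_sum fun k hk => ?_
        have hkn : k ≤ n := Nat.lt_succ_iff.mp (Finset.mem_range.mp hk)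
        calc μ (A k) ≤ μ (A k ∩ B) + μ (A k ∩ C k) := by
              refine (measure_mono fun ω hω => ?_).trans (measure_union_le _ _)
              rcases hcover k hkn (disjointed_subset s k hω) with h | h
              exacts [Or.inl ⟨hω, h⟩, Or.inr ⟨hω, h⟩]
          _ ≤ μ (A k ∩ B) + μ (A k) * M := by
              rw [hindep k hkn]; gcongr; exact hC k hkn
    _ = ∑ k ∈ Finset.range (n + 1), μ (A k ∩ B) + (∑ k ∈ Finset.range (n + 1), μ (A k)) * M := by
        rw [Finset.sum_add_distrib, Finset.sum_mul]
    _ ≤ μ B + 1 * M := by gcongr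
    _ = μ B + M := by rw [one_mul]

variable {E : Type*} [NormedAddCommGroup E] [MeasurableSpace E] [BorelSpace E]
  [SecondCountableTopology E]

theorem identDistrib_sum_Ico_sum_range {X : ℕ → Ω → E} (hX : iIndepFun X μ)
    (hident : ∀ i j, IdentDistrib (X i) (X j) μ μ) (k m : ℕ) :
    IdentDistrib (fun ω => ∑ i ∈ Finset.Ico k (k + m), X i ω)
      (fun ω => ∑ i ∈ Finset.range m, X i ω) μ μ := by
  have hshift : IdentDistrib (fun ω i => X (k + i) ω) (fun ω i => X i ω) μ μ :=
    IdentDistrib.pi (fun i => hident _ _) (hX.precomp (add_right_injective k)) hX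
  have hsum : Measurable fun v : ℕ → E => ∑ i ∈ Finset.range m, v i :=
    Finset.measurable_sum _ fun i _ => measurable_pi_apply i
  simpa [Function.comp_def, Finset.sum_Ico_eq_sum_range] using hshift.comp hsum

theorem ottaviani_measure_biUnion_le [IsProbabilityMeasure μ] {X : ℕ → Ω → E}
    (hX : iIndepFun X μ) (hmeas : ∀ i, Measurable (X i)) {a b ε : ℝ} (hab : a + b ≤ ε) (n : ℕ)
    {M : ℝ≥0∞} (hM : ∀ k ≤ n, μ {ω | b ≤ ‖∑ i ∈ Finset.Ico k n, X i ω‖} ≤ M) :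
    μ (⋃ k ≤ n, {ω | ε ≤ ‖∑ i ∈ Finset.range k, X i ω‖})
      ≤ μ {ω | a ≤ ‖∑ i ∈ Finset.range n, X i ω‖} + M := by
  refine measure_biUnion_le_add_of_indep_disjointed
    (fun k => (Finset.measurable_sum _ fun i _ => hmeas i).norm measurableSet_Ici)
    (fun k hk ω hω => ?_) (fun k hk => ?_) hM
  · have hSk : ∑ i ∈ Finset.range k, X i ω
        = ∑ i ∈ Finset.range n, X i ω - ∑ i ∈ Finset.Ico k n, X i ω :=
      eq_sub_of_add_eq (Finset.sum_range_add_sum_Ico (fun i => X i ω) hk)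
    have htri := norm_sub_le (∑ i ∈ Finset.range n, X i ω) (∑ i ∈ Finset.Ico k n, X i ω)
    rw [← hSk] at htri
    change ε ≤ _ at hω
    simp only [Set.mem_union, Set.mem_ofPred_eq]
    by_contra! h
    linarith [h.1, h.2]
  · have hpast_future := indep_iSup_of_disjoint (fun i => (hmeas i).comap_le) hX.iIndep
      (S := {i | i < k}) (T := {i | k ≤ i})
      (Set.disjoint_left.2 fun i (hi : i < k) hi' => hi.not_ge hi')
    refine (Indep_iff _ _ μ).1 hpast_future _ _ (MeasurableSet.disjointed_of_le fun j hj => ?_) ?_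
    · exact measurable_sum_iSup_comap (fun i hi => (Finset.mem_range.1 hi).trans_le hj)
        (measurable_norm measurableSet_Ici)
    · exact measurable_sum_iSup_comap (fun i hi => (Finset.mem_Ico.1 hi).1)
        (measurable_norm measurableSet_Ici)

end

theorem stmt0_general {Ω : Type*} [MeasurableSpace Ω] (μ : Measure Ω) [IsProbabilityMeasure μ]
    {E : Type*} [NormedAddCommGroup E]
    [MeasurableSpace E] [BorelSpace E] [TopologicalSpace.SeparableSpace E]
    (n : ℕ) (X : ℕ → Ω → E)
    (hmeas : ∀ i, Measurable (X i))
    (hindep : iIndepFun X μ)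
    (hident : ∀ i j, IdentDistrib (X i) (X j) μ μ)
    (S : ℕ → Ω → E) (hS : ∀ k ω, S k ω = ∑ i ∈ Finset.range k, X i ω)
    (ε : ℝ) (hε : 0 < ε) :
    μ {ω | ∃ k ∈ Finset.Icc 1 n, ε ≤ ‖S k ω‖}
      ≤ 3 * (Finset.Icc 1 n).sup (fun k => μ {ω | ε / 3 ≤ ‖S k ω‖}) := by
  have : SecondCountableTopology E := UniformSpace.secondCountable_of_separable E
  obtain rfl : S = fun k ω => ∑ i ∈ Finset.range k, X i ω := funext fun k => funext (hS k)
  set M := (Finset.Icc 1 n).sup fun k => μ {ω | ε / 3 ≤ ‖∑ i ∈ Finset.range k, X i ω‖}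
  have hpartial : ∀ m ≤ n, μ {ω | ε / 3 ≤ ‖∑ i ∈ Finset.range m, X i ω‖} ≤ M := by
    intro m hm
    rcases Nat.eq_zero_or_pos m with rfl | hm0
    · simp [not_le.2 (by positivity : 0 < ε / 3)]
    · exact Finset.le_sup (f := fun k => μ {ω | ε / 3 ≤ ‖∑ i ∈ Finset.range k, X i ω‖})
        (Finset.mem_Icc.2 ⟨hm0, hm⟩)
  have htail : ∀ k ≤ n, μ {ω | ε / 3 ≤ ‖∑ i ∈ Finset.Ico k n, X i ω‖} ≤ M := by
    intro k hk
    have h := identDistrib_sum_Ico_sum_range hindep hident k (n - k)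
    rw [Nat.add_sub_cancel' hk] at h
    exact (h.measure_mem_eq (measurable_norm measurableSet_Ici)).trans_le
      (hpartial _ (Nat.sub_le n k))
  calc μ {ω | ∃ k ∈ Finset.Icc 1 n, ε ≤ ‖∑ i ∈ Finset.range k, X i ω‖}
      ≤ μ (⋃ k ≤ n, {ω | ε ≤ ‖∑ i ∈ Finset.range k, X i ω‖}) :=
        measure_mono fun ω ⟨k, hk, h⟩ => Set.mem_biUnion (Finset.mem_Icc.1 hk).2 h
    _ ≤ μ {ω | ε / 3 ≤ ‖∑ i ∈ Finset.range n, X i ω‖} + M :=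
        ottaviani_measure_biUnion_le hindep hmeas (by linarith) n htail
    _ ≤ M + M := add_le_add_left (hpartial n le_rfl) M
    _ ≤ 3 * M := by rw [← two_mul]; gcongr; norm_num

/-- Lévy–Ottaviani type maximal inequality for i.i.d. Banach-space-valued random
variables: `P(max_{1 ≤ k ≤ n} ‖S_k‖ ≥ ε) ≤ 3 max_{1 ≤ k ≤ n} P(‖S_k‖ ≥ ε/3)`. -/
theorem stmt0 {Ω : Type*} [MeasurableSpace Ω] (μ : Measure Ω) [IsProbabilityMeasure μ]
    {E : Type*} [NormedAddCommGroup E] [NormedSpace ℝ E] [CompleteSpace E]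
    [MeasurableSpace E] [BorelSpace E] [TopologicalSpace.SeparableSpace E]
    (n : ℕ) (X : ℕ → Ω → E)
    (hmeas : ∀ i, Measurable (X i))
    (hindep : iIndepFun X μ)
    (hident : ∀ i j, IdentDistrib (X i) (X j) μ μ)
    (S : ℕ → Ω → E) (hS : ∀ k ω, S k ω = ∑ i ∈ Finset.range k, X i ω)
    (ε : ℝ) (hε : 0 < ε) :
    μ {ω | ∃ k ∈ Finset.Icc 1 n, ε ≤ ‖S k ω‖}
      ≤ 3 * (Finset.Icc 1 n).sup (fun k => μ {ω | ε / 3 ≤ ‖S k ω‖}) :=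
  stmt0_general μ n X hmeas hindep hident S hS ε hε
end

section
/- Knight's identity: for all real $u$ and $v$ and $\tau \in (0,1)$, with $\rho_\tau(u) = u(\tau - 1\{u \le 0\})$, one has $\rho_\tau(u - v) - \rho_\tau(u) = -v(\tau - 1\{u \le 0\}) + \int_0^v \big(1\{u \le t\} - 1\{u \le 0\}\big)\,dt$. -/
/-!
Off the single point `c`, the step function `t ↦ 1{c ≤ t}` is the derivative of `t ↦ max t c`,
so its integral from `a` to `b` is `max b c - max a c`. With `w · 1{w ≤ 0} = min w 0` the check
function reads `ρ_τ(w) = τ w - min w 0`, and Knight's identity becomes the elementary relations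
`min (u - v) 0 = u - max v u` and `min u 0 = u - max 0 u`.
-/

open Set

lemma hasDerivAt_max_const_of_ne {c x : ℝ} (hx : x ≠ c) :
    HasDerivAt (fun t ↦ max t c) (if c ≤ x then 1 else 0) x := by
  rcases hx.lt_or_gt with hxc | hcx
  · rw [if_neg hxc.not_ge]
    refine (hasDerivAt_const x c).congr_of_eventuallyEq ?_
    filter_upwards [Iio_mem_nhds hxc] with t ht
    exact max_eq_right ht.le
  · rw [if_pos hcx.le]
    refine (hasDerivAt_id x).congr_of_eventuallyEq ?_
    filter_upwards [Ioi_mem_nhds hcx] with t ht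
    exact max_eq_left ht.le

lemma monotone_ite_le (c : ℝ) : Monotone (fun t : ℝ ↦ if c ≤ t then (1 : ℝ) else 0) := by
  intro x y hxy
  dsimp only
  split_ifs with hx hy hy
  · exact le_rfl
  · exact absurd (hx.trans hxy) hy
  · exact zero_le_one
  · exact le_rfl

lemma integral_ite_le (a b c : ℝ) :
    ∫ t in a..b, (if c ≤ t then (1 : ℝ) else 0) = max b c - max a c :=
  MeasureTheory.integral_eq_of_hasDerivAt_off_countable _ _ (countable_singleton c)
    (continuous_id.max continuous_const).continuousOn
    (fun _ hx ↦ hasDerivAt_max_const_of_ne hx.2)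
    ((monotone_ite_le c).intervalIntegrable)

lemma mul_ite_nonpos_eq_min (w : ℝ) : w * (if w ≤ 0 then 1 else 0) = min w 0 := by
  split_ifs with hw
  · rw [mul_one, min_eq_left hw]
  · rw [mul_zero, min_eq_right (le_of_not_ge hw)]

theorem stmt5_general (τ u v : ℝ)
    (ρ : ℝ → ℝ) (hρ : ∀ w, ρ w = w * (τ - if w ≤ 0 then 1 else 0)) :
    ρ (u - v) - ρ u
      = -v * (τ - if u ≤ 0 then 1 else 0)
        + ∫ t in (0 : ℝ)..v,
            ((if u ≤ t then (1 : ℝ) else 0) - (if u ≤ 0 then 1 else 0)) := by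
  have hρ_min (w : ℝ) : ρ w = τ * w - min w 0 := by
    rw [hρ, mul_sub, mul_ite_nonpos_eq_min, mul_comm]
  have hintegral : ∫ t in (0 : ℝ)..v,
      ((if u ≤ t then (1 : ℝ) else 0) - (if u ≤ 0 then 1 else 0))
      = (max v u - max 0 u) - v * (if u ≤ 0 then 1 else 0) := by
    rw [intervalIntegral.integral_sub (monotone_ite_le u).intervalIntegrable
      intervalIntegrable_const, integral_ite_le, intervalIntegral.integral_const, sub_zero,
      smul_eq_mul]
  have hmin_sub : min (u - v) 0 = u - max v u := by rw [← min_sub_sub_left, sub_self]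
  have hmin : min u 0 = u - max 0 u := by rw [← min_sub_sub_left, sub_zero, sub_self]
  rw [hintegral, hρ_min, hρ_min, hmin_sub, hmin]
  ring

/-- Knight's identity for the quantile-regression check function. -/
theorem stmt5 (τ u v : ℝ) (hτ : τ ∈ Set.Ioo (0 : ℝ) 1)
    (ρ : ℝ → ℝ) (hρ : ∀ w, ρ w = w * (τ - if w ≤ 0 then 1 else 0)) :
    ρ (u - v) - ρ u
      = -v * (τ - if u ≤ 0 then 1 else 0)
        + ∫ t in (0 : ℝ)..v,
            ((if u ≤ t then (1 : ℝ) else 0) - (if u ≤ 0 then 1 else 0)) :=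
  stmt5_general τ u v ρ hρ
end
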